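/- arXiv:1707.08370 — 6 statements merged into one kernel-verified Lean document; each statement's English description precedes it below -/
import Mathlib

section
/- Let s, q ∈ ℝᵐ with s_{m−1}, q_{m−1} ≥ 0, and let s', q' ∈ ℝ^{m−1} be obtained by replacing the last two coordinates of s and q by the single coordinate √(s_{m−1}² + s_m²) and √(q_{m−1}² + q_m²) respectively. Define g_k(x,y) = √(Σ_{i=1}^{k−1}(xᵢ−yᵢ)² + (x_k+y_k)²) on ℝᵏ. Then g_{m−1}(s', q') ≥ g_m(s, q). -/
theorem sq_sub_add_sq_add_le_sq_sqrt_add_sqrt {x y z w : ℝ} (hxz : 0 ≤ x * z) :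
    (x - z) ^ 2 + (y + w) ^ 2 ≤ (√(x ^ 2 + y ^ 2) + √(z ^ 2 + w ^ 2)) ^ 2 := by
  have hu := Real.sq_sqrt (add_nonneg (sq_nonneg x) (sq_nonneg y))
  have hv := Real.sq_sqrt (add_nonneg (sq_nonneg z) (sq_nonneg w))
  have hyw : y * w ≤ √(x ^ 2 + y ^ 2) * √(z ^ 2 + w ^ 2) :=
    calc y * w ≤ |y| * |w| := abs_mul y w ▸ le_abs_self _
      _ ≤ √(x ^ 2 + y ^ 2) * √(z ^ 2 + w ^ 2) :=
        mul_le_mul (Real.abs_le_sqrt (le_add_of_nonneg_left (sq_nonneg x)))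
          (Real.abs_le_sqrt (le_add_of_nonneg_left (sq_nonneg z))) (abs_nonneg w)
          (Real.sqrt_nonneg _)
  -- After expanding both squares, the gap is `2 * (√(x²+y²) * √(z²+w²) - y * w + x * z)`.
  linear_combination 2 * hyw + 2 * hxz - hu - hv

/-- `a`, `b` are the first m−2 coordinates of s and q, `sp`, `qp` the penultimate
coordinates and `sm`, `qm` the last coordinates. -/
theorem upper_bound_antitone (k : ℕ) (a b : Fin k → ℝ) (sp sm qp qm : ℝ)
    (hsp : 0 ≤ sp) (hqp : 0 ≤ qp) :
    Real.sqrt (∑ i : Fin k, (a i - b i)^2 + (sp - qp)^2 + (sm + qm)^2) ≤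
      Real.sqrt (∑ i : Fin k, (a i - b i)^2 +
        (Real.sqrt (sp^2 + sm^2) + Real.sqrt (qp^2 + qm^2))^2) := by
  rw [add_assoc]
  exact Real.sqrt_le_sqrt <| add_le_add_right
    (sq_sub_add_sq_add_le_sq_sqrt_add_sqrt (mul_nonneg hsp hqp)) _
end

section
/- Let s, q ∈ ℝ^{n} with sₙ ≥ 0, and let q̃ ∈ ℝ^{n+1} satisfy q̃ᵢ = qᵢ for i ≤ n−1, q̃ₙ² + q̃_{n+1}² = qₙ², and q̃_{n+1} ≥ 0. Let ŝ ∈ ℝ^{n+1} be s extended by a zero coordinate. Then ‖s − q‖₂ ≤ ‖ŝ − q̃‖₂ ≤ √(Σ_{i=1}^{n−1}(sᵢ−qᵢ)² + (sₙ+qₙ)²). -/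
/-!
Only the last two coordinates of `ŝ` and `q̃` can differ. There `ŝ` is `(sₙ, 0)`, at distance
`sₙ` from the origin, and `q̃` lies on the circle of radius `qₙ` about the origin, so its last
coordinate satisfies `|q̃ₙ| ≤ qₙ`. Expanding the square, `(sₙ - q̃ₙ)² + q̃ₙ₊₁² = sₙ² + qₙ² - 2 sₙ q̃ₙ`,
which lies between `(sₙ - qₙ)²` and `(sₙ + qₙ)²` because `sₙ ≥ 0`.
-/

section CircleDistance

variable {s x y r : ℝ}

lemma sub_sq_add_sq_eq_of_sq_add_sq_eq (h : x ^ 2 + y ^ 2 = r ^ 2) :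
    (s - x) ^ 2 + y ^ 2 = s ^ 2 + r ^ 2 - 2 * s * x := by
  linear_combination h

lemma abs_le_of_sq_add_sq_eq (hr : 0 ≤ r) (h : x ^ 2 + y ^ 2 = r ^ 2) : |x| ≤ r :=
  abs_le_of_sq_le_sq (by nlinarith [sq_nonneg y]) hr

lemma sub_sq_le_sub_sq_add_sq (hs : 0 ≤ s) (hr : 0 ≤ r) (h : x ^ 2 + y ^ 2 = r ^ 2) :
    (s - r) ^ 2 ≤ (s - x) ^ 2 + y ^ 2 := by
  have hxr : x ≤ r := (abs_le.mp (abs_le_of_sq_add_sq_eq hr h)).2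
  rw [sub_sq_add_sq_eq_of_sq_add_sq_eq h]
  nlinarith [mul_le_mul_of_nonneg_left hxr hs]

lemma sub_sq_add_sq_le_add_sq (hs : 0 ≤ s) (hr : 0 ≤ r) (h : x ^ 2 + y ^ 2 = r ^ 2) :
    (s - x) ^ 2 + y ^ 2 ≤ (s + r) ^ 2 := by
  have hrx : -r ≤ x := (abs_le.mp (abs_le_of_sq_add_sq_eq hr h)).1
  rw [sub_sq_add_sq_eq_of_sq_add_sq_eq h]
  nlinarith [mul_le_mul_of_nonneg_left hrx hs]

end CircleDistance

/-- `a`, `b` are the first n−1 coordinates of s and q, `sn`, `qn` their last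
(altitude) coordinates; `qtn`, `qtn1` are the last two coordinates of the true
embedding q̃ of q in ℝ^{n+1}; ŝ = (s, 0). -/
theorem true_distance_bounds_general (k : ℕ) (a b : Fin k → ℝ) (sn qn qtn qtn1 : ℝ)
    (hsn : 0 ≤ sn) (hqn : 0 ≤ qn) (hqt : qtn^2 + qtn1^2 = qn^2) :
    Real.sqrt (∑ i : Fin k, (a i - b i)^2 + (sn - qn)^2) ≤
        Real.sqrt (∑ i : Fin k, (a i - b i)^2 + (sn - qtn)^2 + (0 - qtn1)^2) ∧
      Real.sqrt (∑ i : Fin k, (a i - b i)^2 + (sn - qtn)^2 + (0 - qtn1)^2) ≤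
        Real.sqrt (∑ i : Fin k, (a i - b i)^2 + (sn + qn)^2) := by
  have hlast : (0 - qtn1) ^ 2 = qtn1 ^ 2 := by ring
  simp only [hlast, add_assoc]
  exact ⟨Real.sqrt_le_sqrt (add_le_add_right (sub_sq_le_sub_sq_add_sq hsn hqn hqt) _),
    Real.sqrt_le_sqrt (add_le_add_right (sub_sq_add_sq_le_add_sq hsn hqn hqt) _)⟩

/-- The n-simplex lower and upper bounds on the true embedded distance.
`a`, `b` are the first n−1 coordinates of s and q, `sn`, `qn` their last
(altitude) coordinates; `qtn`, `qtn1` are the last two coordinates of the true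
embedding q̃ of q in ℝ^{n+1}, with q̃ₙ² + q̃_{n+1}² = qₙ² and q̃_{n+1} ≥ 0;
ŝ = (s, 0). -/
theorem true_distance_bounds (k : ℕ) (a b : Fin k → ℝ) (sn qn qtn qtn1 : ℝ)
    (hsn : 0 ≤ sn) (hqn : 0 ≤ qn) (hqt : qtn^2 + qtn1^2 = qn^2)
    (hqtn1 : 0 ≤ qtn1) :
    Real.sqrt (∑ i : Fin k, (a i - b i)^2 + (sn - qn)^2) ≤
        Real.sqrt (∑ i : Fin k, (a i - b i)^2 + (sn - qtn)^2 + (0 - qtn1)^2) ∧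
      Real.sqrt (∑ i : Fin k, (a i - b i)^2 + (sn - qtn)^2 + (0 - qtn1)^2) ≤
        Real.sqrt (∑ i : Fin k, (a i - b i)^2 + (sn + qn)^2) :=
  true_distance_bounds_general k a b sn qn qtn qtn1 hsn hqn hqt
end

section
/- Let v₁, …, vₙ ∈ ℝ^{n−1} be points whose coordinate matrix is lower-triangular in the sense that (vᵢ)ⱼ = 0 for j ≥ i, with (vᵢ)_{i−1} > 0 for 2 ≤ i ≤ n. Given target distances δ₁, …, δₙ > 0, a point o ∈ ℝⁿ satisfies ‖o − v̂ᵢ‖₂ = δᵢ for all i (where v̂ᵢ is vᵢ extended by a zero last coordinate) if and only if its first n−1 coordinates are uniquely determined by the system: o₁ determined from ‖o‖² = δ₁², and for 2 ≤ i ≤ n, Σ_{j=1}^{i−1}((vᵢ)ⱼ − oⱼ)² + Σ_{j=i}^{n} oⱼ² = δᵢ²; the last coordinate oₙ is determined up to sign. -/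
/-!
The first vertex is the origin, so subtracting its distance equation from that of vertex `i`
cancels the quadratic terms: the difference `o - o'` of two solutions is orthogonal to every
vertex. As the vertices form a lower-triangular system with nonzero subdiagonal, forward
substitution forces the first `n - 1` coordinates of `o - o'` to vanish. Equal distance to the
origin then leaves only `(o n)² = (o' n)²`.
-/

open Finset

lemma sum_mul_sub_eq_zero_of_sum_sq_sub_eq {ι K : Type*} [Field K] [CharZero K]
    {s : Finset ι} {a o o' : ι → K}
    (hnorm : ∑ j ∈ s, o j ^ 2 = ∑ j ∈ s, o' j ^ 2)
    (hdist : ∑ j ∈ s, (o j - a j) ^ 2 = ∑ j ∈ s, (o' j - a j) ^ 2) :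
    ∑ j ∈ s, a j * (o j - o' j) = 0 := by
  have hexpand : ∀ x : ι → K, ∑ j ∈ s, (x j - a j) ^ 2
      = ∑ j ∈ s, x j ^ 2 - 2 * ∑ j ∈ s, a j * x j + ∑ j ∈ s, a j ^ 2 := by
    intro x
    simp only [mul_sum, ← sum_sub_distrib, ← sum_add_distrib]
    exact sum_congr rfl fun j _ => by ring
  rw [hexpand, hexpand, hnorm] at hdist
  have htwice : 2 * ∑ j ∈ s, a j * (o j - o' j) = 0 := by
    simp only [mul_sub, sum_sub_distrib]
    linear_combination -hdist
  simpa using htwice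

section ForwardSubstitution

variable {R : Type*} [Ring R] {n : ℕ} {v : ℕ → ℕ → R} {d : ℕ → R}

lemma sum_row_succ_eq_of_lowerTriangular (htri : ∀ i j, i ≤ j → v i j = 0)
    {j : ℕ} (hj : 1 ≤ j) (hjn : j < n) (hprev : ∀ k, 1 ≤ k → k < j → d k = 0) :
    ∑ k ∈ Icc 1 n, v (j + 1) k * d k = v (j + 1) j * d j := by
  refine sum_eq_single_of_mem j (mem_Icc.mpr ⟨hj, hjn.le⟩) fun k hk hkj => ?_
  rcases lt_or_gt_of_ne hkj with hlt | hgt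
  · rw [hprev k (mem_Icc.mp hk).1 hlt, mul_zero]
  · rw [htri (j + 1) k hgt, zero_mul]

lemma eq_zero_of_lowerTriangular_of_sum_mul_eq_zero [NoZeroDivisors R]
    (htri : ∀ i j, i ≤ j → v i j = 0)
    (hdiag : ∀ i, 2 ≤ i → i ≤ n → v i (i - 1) ≠ 0)
    (hsys : ∀ i, 2 ≤ i → i ≤ n → ∑ k ∈ Icc 1 n, v i k * d k = 0) :
    ∀ j, 1 ≤ j → j ≤ n - 1 → d j = 0 := by
  intro j
  induction j using Nat.strong_induction_on with
  | _ j ih =>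
    intro hj hjn
    have hrow := hsys (j + 1) (by omega) (by omega)
    rw [sum_row_succ_eq_of_lowerTriangular htri hj (by omega)
      fun k hk hkj => ih k hkj hk (by omega)] at hrow
    exact (mul_eq_zero.mp hrow).resolve_left (hdiag (j + 1) (by omega) (by omega))

end ForwardSubstitution

lemma eq_or_eq_neg_of_sum_sq_eq {ι R : Type*} [CommRing R] [NoZeroDivisors R]
    {s : Finset ι} {x y : ι → R} {a : ι} (ha : a ∈ s)
    (hrest : ∀ j ∈ s, j ≠ a → x j = y j)
    (hsq : ∑ j ∈ s, x j ^ 2 = ∑ j ∈ s, y j ^ 2) :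
    x a = y a ∨ x a = -y a := by
  rw [← sub_eq_zero, ← sum_sub_distrib, sum_eq_single_of_mem a ha
    fun j hj hja => by rw [hrest j hj hja, sub_self], sub_eq_zero] at hsq
  exact sq_eq_sq_iff_eq_or_eq_neg.mp hsq

theorem apex_unique_up_to_sign_general (n : ℕ) (hn : 1 ≤ n)
    (v : ℕ → ℕ → ℝ)
    (htri : ∀ i j, i ≤ j → v i j = 0)
    (hpos : ∀ i, 2 ≤ i → i ≤ n → 0 < v i (i - 1))
    (δ : ℕ → ℝ)
    (o o' : ℕ → ℝ)
    (ho : ∀ i, 1 ≤ i → i ≤ n →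
      ∑ j ∈ Finset.Icc 1 n, (o j - v i j)^2 = (δ i)^2)
    (ho' : ∀ i, 1 ≤ i → i ≤ n →
      ∑ j ∈ Finset.Icc 1 n, (o' j - v i j)^2 = (δ i)^2) :
    (∀ j, 1 ≤ j → j ≤ n - 1 → o j = o' j) ∧ (o n = o' n ∨ o n = -o' n) := by
  have hnorm : ∑ j ∈ Icc 1 n, o j ^ 2 = ∑ j ∈ Icc 1 n, o' j ^ 2 := by
    have horigin : ∀ x : ℕ → ℝ, ∑ j ∈ Icc 1 n, (x j - v 1 j) ^ 2 = ∑ j ∈ Icc 1 n, x j ^ 2 :=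
      fun x => sum_congr rfl fun j hj => by rw [htri 1 j (mem_Icc.mp hj).1, sub_zero]
    rw [← horigin o, ← horigin o', ho 1 le_rfl hn, ho' 1 le_rfl hn]
  have horth : ∀ i, 2 ≤ i → i ≤ n → ∑ k ∈ Icc 1 n, v i k * (o k - o' k) = 0 :=
    fun i hi hin => sum_mul_sub_eq_zero_of_sum_sq_sub_eq hnorm
      ((ho i (by omega) hin).trans (ho' i (by omega) hin).symm)
  have hfirst : ∀ j, 1 ≤ j → j ≤ n - 1 → o j = o' j := fun j hj hjn =>
    sub_eq_zero.mp (eq_zero_of_lowerTriangular_of_sum_mul_eq_zero htri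
      (fun i hi hin => (hpos i hi hin).ne') horth j hj hjn)
  refine ⟨hfirst, eq_or_eq_neg_of_sum_sq_eq (mem_Icc.mpr ⟨hn, le_rfl⟩) (fun j hj hjn => ?_) hnorm⟩
  have hjmem := mem_Icc.mp hj
  exact hfirst j hjmem.1 (by omega)

/-- Uniqueness up to reflection of the apex point: given a base simplex with n
vertices `v 1, …, v n` in ℝ^{n−1} (coordinates 1-based, lower triangular with
positive subdiagonal), any two points of ℝⁿ realizing the same positive
distances δ₁, …, δₙ to the (zero-extended) vertices agree in their first n−1
coordinates, and their last coordinates agree up to sign. -/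
theorem apex_unique_up_to_sign (n : ℕ) (hn : 1 ≤ n)
    (v : ℕ → ℕ → ℝ)
    (htri : ∀ i j, i ≤ j → v i j = 0)
    (hpos : ∀ i, 2 ≤ i → i ≤ n → 0 < v i (i - 1))
    (δ : ℕ → ℝ) (hδ : ∀ i, 1 ≤ i → i ≤ n → 0 < δ i)
    (o o' : ℕ → ℝ)
    (ho : ∀ i, 1 ≤ i → i ≤ n →
      ∑ j ∈ Finset.Icc 1 n, (o j - v i j)^2 = (δ i)^2)
    (ho' : ∀ i, 1 ≤ i → i ≤ n →
      ∑ j ∈ Finset.Icc 1 n, (o' j - v i j)^2 = (δ i)^2) :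
    (∀ j, 1 ≤ j → j ≤ n - 1 → o j = o' j) ∧ (o n = o' n ∨ o n = -o' n) :=
  apex_unique_up_to_sign_general n hn v htri hpos δ o o' ho ho'
end

section
/- Let v₁, …, vₙ ∈ ℝ^{n−1} with (vᵢ)ⱼ = 0 for j ≥ i and (vᵢ)_{i−1} > 0 for i ≥ 2, and let δ₁, …, δₙ ≥ 0 be distances to an unknown apex. The output o ∈ ℝⁿ of the ApexAddition algorithm, computed iteratively by o⁽¹⁾ = (δ₁, 0, …, 0) and for i = 2,…,n updating o_{i−1} := o_{i−1}^{(i−1)} − (δᵢ² − ℓᵢ²)/(2(vᵢ)_{i−1}) where ℓᵢ = ‖v̂ᵢ − o^{(i−1)}‖₂, and oᵢ := √((o_{i−1}^{(i−1)})² − o_{i−1}²), satisfies ‖o − v̂ᵢ‖₂ = δᵢ for all 1 ≤ i ≤ n, provided all the square roots taken are of non-negative quantities. -/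
/-!
Induction on the iteration `k`: the state `O k` has zero coordinates beyond `k` and lies at
distance `δ i` from the vertices `v 1, …, v k`. Iteration `k + 1` only changes coordinates
`k` and `k + 1`, keeping `O k k ^ 2 = O (k+1) k ^ 2 + O (k+1) (k+1) ^ 2`, so for a vertex
vanishing at `k + 1` the squared distance changes by `2 · v_k · (O k k - O (k+1) k)`. This is
zero for the old vertices, which also vanish at `k`, and for the new vertex `v (k+1)` the
choice of `O (k+1) k` makes the squared distance exactly `δ (k+1) ^ 2`.
-/

open Finset

def sqDist {ι : Type*} (s : Finset ι) (x y : ι → ℝ) : ℝ := ∑ j ∈ s, (x j - y j) ^ 2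

lemma sqDist_comm {ι : Type*} (s : Finset ι) (x y : ι → ℝ) : sqDist s x y = sqDist s y x :=
  sum_congr rfl fun _ _ => by ring

lemma sum_sub_add_eq_of_eqOn_sdiff_pair {ι M : Type*} [DecidableEq ι] [AddCommGroup M]
    {s : Finset ι} {a b : ι} (ha : a ∈ s) (hb : b ∈ s) (hab : a ≠ b) {f g : ι → M}
    (hfg : ∀ j ∈ s, j ≠ a → j ≠ b → f j = g j) :
    ∑ j ∈ s, f j - (f a + f b) = ∑ j ∈ s, g j - (g a + g b) := by
  have hsub : {a, b} ⊆ s := insert_subset ha (singleton_subset_iff.mpr hb)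
  rw [← sum_sdiff hsub, ← sum_sdiff hsub, sum_pair hab, sum_pair hab, add_sub_cancel_right,
    add_sub_cancel_right]
  refine sum_congr rfl fun j hj => ?_
  simp only [mem_sdiff, mem_insert, mem_singleton, not_or] at hj
  exact hfg j hj.1 hj.2.1 hj.2.2

lemma sqDist_eq_of_rotate {ι : Type*} [DecidableEq ι] {s : Finset ι} {a b : ι}
    (ha : a ∈ s) (hb : b ∈ s) (hab : a ≠ b) {x x' w : ι → ℝ}
    (hx' : ∀ j ∈ s, j ≠ a → j ≠ b → x' j = x j) (hxb : x b = 0) (hwb : w b = 0)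
    (hnorm : x' a ^ 2 + x' b ^ 2 = x a ^ 2) :
    sqDist s x' w = sqDist s x w + 2 * w a * (x a - x' a) := by
  have h := sum_sub_add_eq_of_eqOn_sdiff_pair ha hb hab
    (f := fun j => (x' j - w j) ^ 2) (g := fun j => (x j - w j) ^ 2)
    fun j hj hja hjb => by rw [hx' j hj hja hjb]
  simp only [hxb, hwb] at h
  unfold sqDist
  linear_combination h + hnorm

section ApexAddition

variable {n : ℕ} {O : ℕ → ℕ → ℝ}

lemma apexState_eq_zero_of_lt
    (hinit2 : ∀ j, j ≠ 1 → O 1 j = 0)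
    (hstep3 : ∀ i, 2 ≤ i → i ≤ n → ∀ j, j ≠ i - 1 → j ≠ i → O i j = O (i-1) j)
    {k : ℕ} (hk : 1 ≤ k) (hkn : k ≤ n) {j : ℕ} (hkj : k < j) : O k j = 0 := by
  induction k, hk using Nat.le_induction generalizing j with
  | base => exact hinit2 j (by omega)
  | succ k hk ih =>
    rw [hstep3 (k + 1) (by omega) hkn j (by omega) (by omega)]
    exact ih (by omega) (by omega)

lemma sqDist_apexState_succ
    (hinit2 : ∀ j, j ≠ 1 → O 1 j = 0)
    (hstep2 : ∀ i, 2 ≤ i → i ≤ n →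
      O i i = Real.sqrt ((O (i-1) (i-1))^2 - (O i (i-1))^2))
    (hstep3 : ∀ i, 2 ≤ i → i ≤ n → ∀ j, j ≠ i - 1 → j ≠ i → O i j = O (i-1) j)
    (hsqrt_nonneg : ∀ i, 2 ≤ i → i ≤ n → (O i (i - 1))^2 ≤ (O (i-1) (i-1))^2)
    {k : ℕ} (hk : 1 ≤ k) (hkn : k + 1 ≤ n) {w : ℕ → ℝ} (hw : w (k + 1) = 0) :
    sqDist (Icc 1 n) (O (k + 1)) w
      = sqDist (Icc 1 n) (O k) w + 2 * w k * (O k k - O (k + 1) k) := by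
  have hstep2k := hstep2 (k + 1) (by omega) hkn
  have hle := hsqrt_nonneg (k + 1) (by omega) hkn
  simp only [Nat.add_sub_cancel] at hstep2k hle
  refine sqDist_eq_of_rotate (mem_Icc.mpr ⟨hk, by omega⟩) (mem_Icc.mpr ⟨by omega, hkn⟩)
    (by omega) (fun j _ hjk hjk1 => hstep3 (k + 1) (by omega) hkn j hjk hjk1)
    (apexState_eq_zero_of_lt hinit2 hstep3 hk (by omega) (by omega)) hw ?_
  rw [hstep2k, Real.sq_sqrt (sub_nonneg.mpr hle)]
  ring

lemma sqDist_apexState_vertex {v : ℕ → ℕ → ℝ} {δ : ℕ → ℝ} (hn : 1 ≤ n)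
    (htri : ∀ i j, i ≤ j → v i j = 0)
    (hpos : ∀ i, 2 ≤ i → i ≤ n → 0 < v i (i - 1))
    (hinit1 : O 1 1 = δ 1)
    (hinit2 : ∀ j, j ≠ 1 → O 1 j = 0)
    (hstep1 : ∀ i, 2 ≤ i → i ≤ n →
      O i (i - 1) = O (i-1) (i-1) -
        ((δ i)^2 - ∑ j ∈ Finset.Icc 1 n, (v i j - O (i-1) j)^2) /
          (2 * v i (i - 1)))
    (hstep2 : ∀ i, 2 ≤ i → i ≤ n →
      O i i = Real.sqrt ((O (i-1) (i-1))^2 - (O i (i-1))^2))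
    (hstep3 : ∀ i, 2 ≤ i → i ≤ n → ∀ j, j ≠ i - 1 → j ≠ i → O i j = O (i-1) j)
    (hsqrt_nonneg : ∀ i, 2 ≤ i → i ≤ n → (O i (i - 1))^2 ≤ (O (i-1) (i-1))^2)
    {k : ℕ} (hk : 1 ≤ k) (hkn : k ≤ n) {i : ℕ} (hi : 1 ≤ i) (hik : i ≤ k) :
    sqDist (Icc 1 n) (O k) (v i) = δ i ^ 2 := by
  induction k, hk using Nat.le_induction generalizing i with
  | base =>
    obtain rfl : i = 1 := by omega
    rw [sqDist, sum_eq_single_of_mem 1 (mem_Icc.mpr ⟨le_rfl, hn⟩), hinit1, htri 1 1 le_rfl,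
      sub_zero]
    intro j hj hj1
    rw [hinit2 j hj1, htri 1 j (mem_Icc.mp hj).1, sub_zero, zero_pow two_ne_zero]
  | succ k hk ih =>
    rw [sqDist_apexState_succ hinit2 hstep2 hstep3 hsqrt_nonneg hk hkn
      (htri i (k + 1) (by omega))]
    rcases Nat.lt_or_ge i (k + 1) with hik' | hik'
    · rw [ih (by omega) hi (by omega), htri i k (by omega), mul_zero, zero_mul, add_zero]
    · obtain rfl : i = k + 1 := by omega
      have hc := hpos (k + 1) (by omega) hkn
      have hstep1k := hstep1 (k + 1) (by omega) hkn
      simp only [Nat.add_sub_cancel] at hc hstep1k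
      rw [hstep1k, sqDist_comm]
      unfold sqDist
      field_simp
      ring

end ApexAddition

/-- Correctness of the ApexAddition algorithm (1-based indexing).  `v i j` is
the j-th coordinate of the i-th vertex of the base simplex (lower triangular,
positive subdiagonal, zero-extended to ℝⁿ), `δ i` the prescribed distance from
the unknown apex to vertex i, and `O i j` the j-th coordinate of the
algorithm's state after iteration i.  If the states satisfy the recursion of
the algorithm and every square root taken is of a non-negative quantity, then
the final output `O n` realizes all the prescribed distances. -/
theorem apexAddition_correct (n : ℕ) (hn : 1 ≤ n)
    (v : ℕ → ℕ → ℝ)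
    (htri : ∀ i j, i ≤ j → v i j = 0)
    (hpos : ∀ i, 2 ≤ i → i ≤ n → 0 < v i (i - 1))
    (δ : ℕ → ℝ) (hδ : ∀ i, 1 ≤ i → i ≤ n → 0 ≤ δ i)
    (O : ℕ → ℕ → ℝ)
    (hinit1 : O 1 1 = δ 1)
    (hinit2 : ∀ j, j ≠ 1 → O 1 j = 0)
    (hstep1 : ∀ i, 2 ≤ i → i ≤ n →
      O i (i - 1) = O (i-1) (i-1) -
        ((δ i)^2 - ∑ j ∈ Finset.Icc 1 n, (v i j - O (i-1) j)^2) /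
          (2 * v i (i - 1)))
    (hstep2 : ∀ i, 2 ≤ i → i ≤ n →
      O i i = Real.sqrt ((O (i-1) (i-1))^2 - (O i (i-1))^2))
    (hstep3 : ∀ i, 2 ≤ i → i ≤ n → ∀ j, j ≠ i - 1 → j ≠ i → O i j = O (i-1) j)
    (hsqrt_nonneg : ∀ i, 2 ≤ i → i ≤ n →
      (O i (i - 1))^2 ≤ (O (i-1) (i-1))^2) :
    ∀ i, 1 ≤ i → i ≤ n →
      Real.sqrt (∑ j ∈ Finset.Icc 1 n, (O n j - v i j)^2) = δ i := by
  intro i hi hin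
  have hsq : sqDist (Icc 1 n) (O n) (v i) = δ i ^ 2 :=
    sqDist_apexState_vertex hn htri hpos hinit1 hinit2 hstep1 hstep2 hstep3 hsqrt_nonneg
      hn le_rfl hi hin
  rw [← sqDist, hsq, Real.sqrt_sq (hδ i hi hin)]
end

section
/- In the ApexAddition recursion, if o^{(i)} denotes the state after iteration i, then for every 1 ≤ i ≤ n−2, Σ_{j=i}^{n} oⱼ² = (oᵢ^{(i)})², where o is the final output. -/
theorem Finset.sum_Icc_eq_of_eq_sub {G : Type*} [AddCommGroup G] {f g : ℕ → G} {m n : ℕ}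
    (hmn : m ≤ n) (hf : ∀ k ∈ Finset.Ico m n, f k = g k - g (k + 1)) (hn : f n = g n) :
    ∑ k ∈ Finset.Icc m n, f k = g m := by
  have telescope : ∑ k ∈ Finset.Ico m n, f k = g m - g n := by
    rw [Finset.sum_congr rfl hf, ← neg_sub (g n), ← Finset.sum_Ico_sub g hmn,
      ← Finset.sum_neg_distrib]
    simp only [neg_sub]
  rw [← Finset.Ico_add_one_right_eq_Icc, Finset.sum_Ico_succ_top hmn, telescope, hn,
    sub_add_cancel]

theorem apexAddition_invariant_general (n : ℕ) (O : ℕ → ℕ → ℝ)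
    (hrec : ∀ k, 1 ≤ k → k ≤ n - 1 →
      (O n k)^2 = (O k k)^2 - (O (k+1) (k+1))^2) :
    ∀ i, 1 ≤ i → i ≤ n - 2 →
      ∑ j ∈ Finset.Icc i n, (O n j)^2 = (O i i)^2 := by
  intro i hi hin
  refine Finset.sum_Icc_eq_of_eq_sub (g := fun j ↦ (O j j)^2) (by omega) (fun k hk ↦ ?_) rfl
  obtain ⟨hik, hkn⟩ := Finset.mem_Ico.mp hk
  exact hrec k (by omega) (by omega)

/-- Invariant of the ApexAddition recursion (1-based indexing): writing `O i j`
for the j-th coordinate of the state after iteration i (so the final output is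
`O n`), the recursion facts oᵢ = oᵢ^{(h)} for i < h, o^{(i)}_h = 0 for h > i,
and (o_k)² = (o_k^{(k)})² − (o_{k+1}^{(k+1)})² imply
Σ_{j=i}^{n} oⱼ² = (oᵢ^{(i)})² for 1 ≤ i ≤ n−2. -/
theorem apexAddition_invariant (n : ℕ) (O : ℕ → ℕ → ℝ)
    (hfix : ∀ i h, i < h → h ≤ n → O h i = O n i)
    (hzero : ∀ i h, i < h → O i h = 0)
    (hrec : ∀ k, 1 ≤ k → k ≤ n - 1 →
      (O n k)^2 = (O k k)^2 - (O (k+1) (k+1))^2) :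
    ∀ i, 1 ≤ i → i ≤ n - 2 →
      ∑ j ∈ Finset.Icc i n, (O n j)^2 = (O i i)^2 :=
  apexAddition_invariant_general n O hrec
end

section
/- Suppose a semi-metric space (U,d) has the property that every n+2 points embed isometrically in ℝ^{n+1}. Fix p₁,…,pₙ ∈ U and suppose there is a map φ : U → ℝⁿ such that for every x ∈ U, φ(x) has last coordinate ≥ 0 and ‖φ(x) − wᵢ‖₂ = d(x, pᵢ) for fixed points w₁,…,wₙ ∈ ℝ^{n−1}×{0} forming a nondegenerate simplex. Then for all s, q ∈ U, ‖φ(s) − φ(q)‖₂ ≤ d(s,q), i.e., φ is a contraction (short map) from (U,d) to ℝⁿ. -/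
local notation "⟪" x ", " y "⟫" => @inner ℝ _ _ x y

private lemma polar6 {E : Type*} [NormedAddCommGroup E] [InnerProductSpace ℝ E] (x y z : E) :
    ⟪x - z, y - z⟫ = (dist x z ^ 2 + dist y z ^ 2 - dist x y ^ 2) / 2 := by
  have h := norm_sub_sq_real (x - z) (y - z)
  rw [sub_sub_sub_cancel_right] at h
  simp only [dist_eq_norm]
  linarith

set_option maxHeartbeats 1600000 in
/-- The n-simplex projection φ, sending each object to its apex (with
non-negative altitude) above a fixed nondegenerate base simplex lying in the
hyperplane ℝ^{n−1}×{0}, is a contraction (short map), for any semi-metric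
space with the (n+2)-point property.  Here there are n+1 pivots. -/
theorem nsimplex_projection_short {U : Type*} (d : U → U → ℝ)
    (hd_self : ∀ x, d x x = 0) (hd_symm : ∀ x y, d x y = d y x)
    (hd_nonneg : ∀ x y, 0 ≤ d x y)
    (n : ℕ)
    (hembed : ∀ f : Fin (n+3) → U,
      ∃ g : Fin (n+3) → EuclideanSpace ℝ (Fin (n+2)),
        ∀ i j, dist (g i) (g j) = d (f i) (f j))
    (p : Fin (n+1) → U)
    (w : Fin (n+1) → EuclideanSpace ℝ (Fin (n+1)))
    (hw0 : ∀ i, w i (Fin.last n) = 0)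
    (hindep : AffineIndependent ℝ w)
    (φ : U → EuclideanSpace ℝ (Fin (n+1)))
    (hφlast : ∀ x, 0 ≤ φ x (Fin.last n))
    (hφdist : ∀ x i, dist (φ x) (w i) = d x (p i)) :
    ∀ s q : U, dist (φ s) (φ q) ≤ d s q := by
  intro s q
  -- φ maps pivots to the w's
  have hφp : ∀ i, φ (p i) = w i := by
    intro i
    have h := hφdist (p i) i
    rw [hd_self] at h
    exact dist_eq_zero.mp h
  have hww : ∀ i j, dist (w i) (w j) = d (p i) (p j) := by
    intro i j; rw [← hφp i]; exact hφdist (p i) j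
  -- the embedding of the n+3 points
  set f : Fin (n+3) → U := fun i =>
    if h : (i : ℕ) < n + 1 then p ⟨i, h⟩ else if (i : ℕ) = n + 1 then s else q with hf
  obtain ⟨g, hg⟩ := hembed f
  set I : Fin (n+1) → Fin (n+3) := fun i => ⟨i, by omega⟩ with hI
  have hfI : ∀ i, f (I i) = p i := by
    intro i; simp [hf, hI]; intro h; omega
  have hfS : f ⟨n+1, by omega⟩ = s := by simp [hf]
  have hfQ : f ⟨n+2, by omega⟩ = q := by simp [hf]
  set G : Fin (n+1) → EuclideanSpace ℝ (Fin (n+2)) := fun i => g (I i) with hG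
  set S : EuclideanSpace ℝ (Fin (n+2)) := g ⟨n+1, by omega⟩ with hS
  set Q : EuclideanSpace ℝ (Fin (n+2)) := g ⟨n+2, by omega⟩ with hQ
  have hGG : ∀ i j, dist (G i) (G j) = d (p i) (p j) := by
    intro i j; rw [hG]; simp only; rw [hg, hfI, hfI]
  have hSG : ∀ i, dist S (G i) = d s (p i) := by
    intro i; rw [hS, hG]; simp only; rw [hg, hfS, hfI]
  have hQG : ∀ i, dist Q (G i) = d q (p i) := by
    intro i; rw [hQ, hG]; simp only; rw [hg, hfQ, hfI]
  have hSQd : dist S Q = d s q := by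
    rw [hS, hQ]; rw [hg, hfS, hfQ]
  -- difference vectors
  set xs : EuclideanSpace ℝ (Fin (n+1)) := φ s - w 0 with hxs
  set xq : EuclideanSpace ℝ (Fin (n+1)) := φ q - w 0 with hxq
  set u : Fin n → EuclideanSpace ℝ (Fin (n+1)) := fun i => w i.succ - w 0 with hu
  set vG : Fin n → EuclideanSpace ℝ (Fin (n+2)) := fun i => G i.succ - G 0 with hvG
  have hinner1 : ∀ i j, ⟪vG i, vG j⟫ = ⟪u i, u j⟫ := by
    intro i j
    rw [hvG, hu]; simp only
    simp only [polar6, hGG, hww]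
  have hinner2 : ∀ i, ⟪S - G 0, vG i⟫ = ⟪xs, u i⟫ := by
    intro i
    rw [hvG, hu, hxs]; simp only
    simp only [polar6, hGG, hSG, hww, hφdist]
  have hinner3 : ∀ i, ⟪Q - G 0, vG i⟫ = ⟪xq, u i⟫ := by
    intro i
    rw [hvG, hu, hxq]; simp only
    simp only [polar6, hGG, hQG, hww, hφdist]
  have hnS : ‖S - G 0‖ = ‖xs‖ := by
    rw [hxs, ← dist_eq_norm, ← dist_eq_norm, hSG, hφdist]
  have hnQ : ‖Q - G 0‖ = ‖xq‖ := by
    rw [hxq, ← dist_eq_norm, ← dist_eq_norm, hQG, hφdist]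
  -- the hyperplane K and the unit normal e
  set e : EuclideanSpace ℝ (Fin (n+1)) := EuclideanSpace.single (Fin.last n) (1:ℝ) with he_def
  have he : ‖e‖ = 1 := by rw [he_def, EuclideanSpace.norm_single]; norm_num
  have hene : e ≠ 0 := by
    intro h; rw [h, norm_zero] at he; norm_num at he
  have hinner_e : ∀ y : EuclideanSpace ℝ (Fin (n+1)), ⟪e, y⟫ = y (Fin.last n) := by
    intro y; rw [he_def, EuclideanSpace.inner_single_left]; simp
  set K : Submodule ℝ (EuclideanSpace ℝ (Fin (n+1))) := (Submodule.span ℝ {e})ᗮ with hK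
  have hmemK : ∀ y : EuclideanSpace ℝ (Fin (n+1)), y (Fin.last n) = 0 → y ∈ K := by
    intro y hy
    rw [hK, Submodule.mem_orthogonal_singleton_iff_inner_right, hinner_e, hy]
  have hKinner : ∀ y ∈ K, ⟪e, y⟫ = 0 := by
    intro y hy
    rw [hK] at hy
    exact Submodule.mem_orthogonal_singleton_iff_inner_right.mp hy
  have hrank : Module.finrank ℝ K = n := by
    have h1 : Module.finrank ℝ (Submodule.span ℝ {e}) = 1 := finrank_span_singleton hene
    have h2 := Submodule.finrank_add_finrank_orthogonal
      (K := Submodule.span ℝ ({e} : Set (EuclideanSpace ℝ (Fin (n+1)))))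
    rw [finrank_euclideanSpace_fin, h1] at h2
    rw [hK]; omega
  -- u is linearly independent and lies in K
  have hulast : ∀ i, u i (Fin.last n) = 0 := by
    intro i; rw [hu]; simp [hw0]
  have humem : ∀ i, u i ∈ K := fun i => hmemK _ (hulast i)
  have hliu : LinearIndependent ℝ u := by
    have h0 := (affineIndependent_iff_linearIndependent_vsub ℝ w 0).mp hindep
    have hinj : Function.Injective
        (fun i : Fin n => (⟨i.succ, Fin.succ_ne_zero i⟩ : {x : Fin (n+1) // x ≠ 0})) := by
      intro a b hab
      have := congrArg Subtype.val hab
      simpa [Fin.succ_inj] using this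
    have h1 := h0.comp _ hinj
    rw [hu]
    exact h1
  set u' : Fin n → K := fun i => ⟨u i, humem i⟩ with hu'
  have hliu' : LinearIndependent ℝ u' := by
    apply LinearIndependent.of_comp K.subtype
    have : (K.subtype ∘ u') = u := by funext i; simp [hu']
    rw [this]; exact hliu
  have hspan : Submodule.span ℝ (Set.range u') = ⊤ := by
    apply Submodule.eq_top_of_finrank_eq
    rw [finrank_span_eq_card hliu', Fintype.card_fin, hrank]
  set b : Module.Basis (Fin n) ℝ K := Module.Basis.mk hliu' hspan.ge with hb
  have hbcoe : ∀ i, ((b i : K) : EuclideanSpace ℝ (Fin (n+1))) = u i := by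
    intro i; rw [hb, Module.Basis.coe_mk]
  set T : K →ₗ[ℝ] EuclideanSpace ℝ (Fin (n+2)) := b.constr ℝ vG with hT
  have hTb : ∀ i, T (b i) = vG i := by
    intro i; rw [hT]; exact b.constr_basis ℝ vG i
  -- T is an isometry of inner products
  have key : ∀ x y : K, ⟪T x, T y⟫ = ⟪(x : EuclideanSpace ℝ (Fin (n+1))), (y : EuclideanSpace ℝ (Fin (n+1)))⟫ := by
    let B : K →ₗ[ℝ] K →ₗ[ℝ] ℝ := LinearMap.mk₂ ℝ (fun x y : K => ⟪T x, T y⟫)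
      (fun a b c => by simp only [map_add, inner_add_left])
      (fun r a c => by simp only [map_smul, real_inner_smul_left, smul_eq_mul])
      (fun a b c => by simp only [map_add, inner_add_right])
      (fun r a c => by simp only [map_smul, real_inner_smul_right, smul_eq_mul])
    let B' : K →ₗ[ℝ] K →ₗ[ℝ] ℝ := LinearMap.mk₂ ℝ
      (fun x y : K => ⟪(x : EuclideanSpace ℝ (Fin (n+1))), (y : EuclideanSpace ℝ (Fin (n+1)))⟫)
      (fun a b c => by simp only [Submodule.coe_add, inner_add_left])
      (fun r a c => by simp only [Submodule.coe_smul, real_inner_smul_left, smul_eq_mul])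
      (fun a b c => by simp only [Submodule.coe_add, inner_add_right])
      (fun r a c => by simp only [Submodule.coe_smul, real_inner_smul_right, smul_eq_mul])
    have hBB : B = B' := by
      refine b.ext fun i => b.ext fun j => ?_
      show ⟪T (b i), T (b j)⟫ = ⟪((b i : K) : EuclideanSpace ℝ (Fin (n+1))), ((b j : K) : EuclideanSpace ℝ (Fin (n+1)))⟫
      rw [hTb i, hTb j, hbcoe i, hbcoe j, hinner1]
    intro x y
    have h1 := LinearMap.congr_fun (LinearMap.congr_fun hBB x) y
    exact h1
  -- the apex decompositions
  set ts : ℝ := φ s (Fin.last n) with hts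
  set tq : ℝ := φ q (Fin.last n) with htq
  have hts0 : 0 ≤ ts := hφlast s
  have htq0 : 0 ≤ tq := hφlast q
  have hxs_last : xs (Fin.last n) = ts := by
    rw [hxs]; simp [hw0, hts]
  have hxq_last : xq (Fin.last n) = tq := by
    rw [hxq]; simp [hw0, htq]
  have haslmem : (xs - ts • e) ∈ K := by
    apply hmemK
    have : (xs - ts • e) (Fin.last n) = xs (Fin.last n) - ts * e (Fin.last n) := rfl
    rw [this, hxs_last, he_def]
    simp
  have haqlmem : (xq - tq • e) ∈ K := by
    apply hmemK
    have : (xq - tq • e) (Fin.last n) = xq (Fin.last n) - tq * e (Fin.last n) := rfl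
    rw [this, hxq_last, he_def]
    simp
  set As : K := ⟨xs - ts • e, haslmem⟩ with hAs
  set Aq : K := ⟨xq - tq • e, haqlmem⟩ with hAq
  have hAscoe : ((As : K) : EuclideanSpace ℝ (Fin (n+1))) = xs - ts • e := rfl
  have hAqcoe : ((Aq : K) : EuclideanSpace ℝ (Fin (n+1))) = xq - tq • e := rfl
  set vs : EuclideanSpace ℝ (Fin (n+2)) := S - G 0 - T As with hvs
  set vq : EuclideanSpace ℝ (Fin (n+2)) := Q - G 0 - T Aq with hvq
  -- orthogonality of vs, vq to the range of T
  have hip_As : ∀ i, ⟪(As : EuclideanSpace ℝ (Fin (n+1))), u i⟫ = ⟪xs, u i⟫ := by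
    intro i
    rw [hAscoe, inner_sub_left, real_inner_smul_left, hinner_e, hulast i]
    ring
  have hip_Aq : ∀ i, ⟪(Aq : EuclideanSpace ℝ (Fin (n+1))), u i⟫ = ⟪xq, u i⟫ := by
    intro i
    rw [hAqcoe, inner_sub_left, real_inner_smul_left, hinner_e, hulast i]
    ring
  have horth_s : ∀ y : K, ⟪vs, T y⟫ = 0 := by
    have hfun : ((innerₛₗ ℝ vs).comp T) = (0 : K →ₗ[ℝ] ℝ) := by
      refine b.ext fun i => ?_
      simp only [LinearMap.comp_apply, innerₛₗ_apply_apply, LinearMap.zero_apply]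
      rw [hTb i, hvs, inner_sub_left, hinner2 i, ← hTb i, key As (b i), hbcoe i, hip_As i]
      ring
    intro y
    have := LinearMap.congr_fun hfun y
    simpa using this
  have horth_q : ∀ y : K, ⟪vq, T y⟫ = 0 := by
    have hfun : ((innerₛₗ ℝ vq).comp T) = (0 : K →ₗ[ℝ] ℝ) := by
      refine b.ext fun i => ?_
      simp only [LinearMap.comp_apply, innerₛₗ_apply_apply, LinearMap.zero_apply]
      rw [hTb i, hvq, inner_sub_left, hinner3 i, ← hTb i, key Aq (b i), hbcoe i, hip_Aq i]
      ring
    intro y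
    have := LinearMap.congr_fun hfun y
    simpa using this
  -- bookkeeping
  have hbsbq : ⟪T As, T Aq⟫ = ⟪xs - ts • e, xq - tq • e⟫ := key As Aq
  have hdecomp_s : S - G 0 = T As + vs := by rw [hvs]; abel
  have hdecomp_q : Q - G 0 = T Aq + vq := by rw [hvq]; abel
  have hcross : ⟪S - G 0, Q - G 0⟫ = ⟪xs - ts • e, xq - tq • e⟫ + ⟪vs, vq⟫ := by
    rw [hdecomp_s, hdecomp_q, inner_add_left, inner_add_right, inner_add_right]
    have h1 : ⟪T As, vq⟫ = 0 := by rw [real_inner_comm]; exact horth_q As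
    have h2 : ⟪vs, T Aq⟫ = 0 := horth_s Aq
    rw [h1, h2, hbsbq]
    ring
  have hes : ⟪e, xs - ts • e⟫ = 0 := hKinner _ haslmem
  have heq2 : ⟪e, xq - tq • e⟫ = 0 := hKinner _ haqlmem
  have hee : ⟪e, e⟫ = (1:ℝ) := by rw [real_inner_self_eq_norm_sq, he]; norm_num
  have hexq : ⟪e, xq⟫ = tq := by rw [hinner_e, hxq_last]
  have hexs : ⟪e, xs⟫ = ts := by rw [hinner_e, hxs_last]
  have hxsxq : ⟪xs, xq⟫ = ⟪xs - ts • e, xq - tq • e⟫ + ts * tq := by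
    have h1 : ⟪xs - ts • e, xq - tq • e⟫
        = ⟪xs, xq⟫ - tq * ⟪xs, e⟫ - ts * ⟪e, xq⟫ + ts * (tq * ⟪e, e⟫) := by
      simp only [inner_sub_left, inner_sub_right, real_inner_smul_left,
        real_inner_smul_right]
      ring
    have h2 : ⟪xs, e⟫ = ts := by rw [real_inner_comm]; exact hexs
    rw [h1, h2, hexq, hee]; ring
  -- norm relations
  have hnormsq_s : ‖xs‖^2 = ‖xs - ts • e‖^2 + ts^2 := by
    have h := norm_add_sq_real (xs - ts • e) (ts • e)
    have h0 : xs - ts • e + ts • e = xs := by abel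
    rw [h0] at h
    have h2 : ⟪xs - ts • e, ts • e⟫ = 0 := by
      rw [real_inner_comm, real_inner_smul_left, hes]; ring
    have h3 : ‖ts • e‖^2 = ts^2 := by
      rw [norm_smul, he, Real.norm_eq_abs, mul_one, sq_abs]
    rw [h2, h3] at h; linarith
  have hnormsq_q : ‖xq‖^2 = ‖xq - tq • e‖^2 + tq^2 := by
    have h := norm_add_sq_real (xq - tq • e) (tq • e)
    have h0 : xq - tq • e + tq • e = xq := by abel
    rw [h0] at h
    have h2 : ⟪xq - tq • e, tq • e⟫ = 0 := by
      rw [real_inner_comm, real_inner_smul_left, heq2]; ring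
    have h3 : ‖tq • e‖^2 = tq^2 := by
      rw [norm_smul, he, Real.norm_eq_abs, mul_one, sq_abs]
    rw [h2, h3] at h; linarith
  have hTAs_norm : ‖T As‖^2 = ‖xs - ts • e‖^2 := by
    have h := key As As
    rw [real_inner_self_eq_norm_sq, real_inner_self_eq_norm_sq] at h
    exact h
  have hTAq_norm : ‖T Aq‖^2 = ‖xq - tq • e‖^2 := by
    have h := key Aq Aq
    rw [real_inner_self_eq_norm_sq, real_inner_self_eq_norm_sq] at h
    exact h
  have hvs_sq : ‖vs‖^2 = ts^2 := by
    have h := norm_add_sq_real (T As) vs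
    rw [← hdecomp_s] at h
    have h0 : ⟪T As, vs⟫ = 0 := by rw [real_inner_comm]; exact horth_s As
    have hnS2 : ‖S - G 0‖^2 = ‖xs‖^2 := by rw [hnS]
    rw [h0] at h
    linarith
  have hvq_sq : ‖vq‖^2 = tq^2 := by
    have h := norm_add_sq_real (T Aq) vq
    rw [← hdecomp_q] at h
    have h0 : ⟪T Aq, vq⟫ = 0 := by rw [real_inner_comm]; exact horth_q Aq
    have hnQ2 : ‖Q - G 0‖^2 = ‖xq‖^2 := by rw [hnQ]
    rw [h0] at h
    linarith
  have hvs_n : ‖vs‖ = ts := by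
    have h := Real.sqrt_sq (norm_nonneg vs)
    rw [← h, hvs_sq, Real.sqrt_sq hts0]
  have hvq_n : ‖vq‖ = tq := by
    have h := Real.sqrt_sq (norm_nonneg vq)
    rw [← h, hvq_sq, Real.sqrt_sq htq0]
  have hvv : ⟪vs, vq⟫ ≤ ts * tq := by
    have h := real_inner_le_norm vs vq
    rw [hvs_n, hvq_n] at h; exact h
  have hfinal : ⟪S - G 0, Q - G 0⟫ ≤ ⟪xs, xq⟫ := by
    rw [hcross, hxsxq]; linarith
  have hdistsq : dist (φ s) (φ q)^2 ≤ (d s q)^2 := by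
    rw [← hSQd, dist_eq_norm, dist_eq_norm]
    have e1 : φ s - φ q = xs - xq := by rw [hxs, hxq]; abel
    have e2 : S - Q = (S - G 0) - (Q - G 0) := by abel
    rw [e1, e2, norm_sub_sq_real xs xq, norm_sub_sq_real (S - G 0) (Q - G 0)]
    have hnS2 : ‖S - G 0‖^2 = ‖xs‖^2 := by rw [hnS]
    have hnQ2 : ‖Q - G 0‖^2 = ‖xq‖^2 := by rw [hnQ]
    linarith
  calc dist (φ s) (φ q) = Real.sqrt (dist (φ s) (φ q)^2) := (Real.sqrt_sq dist_nonneg).symm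
    _ ≤ Real.sqrt ((d s q)^2) := Real.sqrt_le_sqrt hdistsq
    _ = d s q := Real.sqrt_sq (hd_nonneg s q)
end
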